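/- arXiv:1610.08647 — 5 statements merged into one kernel-verified Lean document; each statement's English description precedes it below -/
import Mathlib

section
/- Let A, B be Hermitian forms with B positive definite on V, let E = span{ψ¹,…,ψˡ} be spanned by l B-orthonormal eigenvectors with A(ψⁱ, v) = λⁱ B(ψⁱ, v) for all v ∈ V and 0 < λ¹ ≤ … ≤ λˡ, let X be a subspace with A-orthogonal projection Π onto X, and assume Π is injective on E. Then the l-th discrete minimax eigenvalue λ_N^l over X satisfies λ_N^l ≤ λˡ · max_{0≠v∈E} B(v,v)/B(Πv, Πv). -/
/-!
Take `W = Π E`, which is `l`-dimensional because `Π` is injective on `E`, so `λ_N^l` is at most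
the largest Rayleigh quotient on `W`. For `v ∈ E`, `A(Πv, Πv) ≤ A(v, v)` since `v - Πv` is
`A`-orthogonal to `X`, and `A(v, v) ≤ λˡ B(v, v)` by expanding `v` in the eigenbasis. Hence
`A(Πv, Πv) / B(Πv, Πv) ≤ λˡ · B(v, v) / B(Πv, Πv)`. The supremum of the last ratio over `E` is
finite because the ratio is continuous and scale invariant on a finite-dimensional space.
-/

open Complex

section Sesquilinear

variable {V : Type*} [AddCommGroup V] [Module ℂ V] (A : V →ₗ⋆[ℂ] V →ₗ[ℂ] ℂ)

lemma sesq_sum_smul_sum_smul {ι : Type*} [Fintype ι] (c : ι → ℂ) (e f : ι → V) :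
    A (∑ i, c i • e i) (∑ j, c j • f j)
      = ∑ i, ∑ j, (starRingEnd ℂ) (c i) * c j * A (e i) (f j) := by
  simp only [map_sum, LinearMap.map_smulₛₗ₂, LinearMap.sum_apply, map_smul, smul_eq_mul,
    Finset.mul_sum, mul_assoc]
  rw [Finset.sum_comm]
  exact Finset.sum_congr rfl fun _ _ => Finset.sum_congr rfl fun _ _ => mul_left_comm _ _ _

lemma re_sesq_sum_smul_self_of_diagonal {ι : Type*} [Fintype ι] [DecidableEq ι] (c : ι → ℂ)
    (e : ι → V) (d : ι → ℝ) (hd : ∀ i j, A (e i) (e j) = if i = j then (d i : ℂ) else 0) :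
    (A (∑ i, c i • e i) (∑ i, c i • e i)).re = ∑ i, normSq (c i) * d i := by
  simp only [sesq_sum_smul_sum_smul, hd, mul_ite, mul_zero, Finset.sum_ite_eq,
    Finset.mem_univ, if_true, mul_comm ((starRingEnd ℂ) _), mul_conj, re_sum, ← ofReal_mul,
    ofReal_re]

lemma continuous_sesq_sum_smul_self {ι : Type*} [Fintype ι] (e : ι → V) :
    Continuous fun c : ι → ℂ => A (∑ i, c i • e i) (∑ i, c i • e i) := by
  simp only [sesq_sum_smul_sum_smul]
  fun_prop

lemma re_sesq_smul_self (c : ℂ) (x : V) : (A (c • x) (c • x)).re = normSq c * (A x x).re := by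
  rw [LinearMap.map_smulₛₗ₂, map_smul, smul_eq_mul, smul_eq_mul, ← mul_assoc,
    mul_comm ((starRingEnd ℂ) c), mul_conj, re_ofReal_mul]

lemma re_sesq_self_le_add_of_orthogonal {u w : V} (huw : A u w = 0) (hwu : A w u = 0)
    (hw : 0 ≤ (A w w).re) : (A u u).re ≤ (A (u + w) (u + w)).re := by
  simp only [map_add, LinearMap.add_apply, huw, hwu, add_zero, zero_add, add_re]
  linarith

lemma re_sesq_self_le_of_orthogonalProjection
    (hAherm : ∀ x y : V, A y x = (starRingEnd ℂ) (A x y)) (hApos : ∀ x : V, 0 ≤ (A x x).re)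
    {X : Submodule ℂ V} {P : V →ₗ[ℂ] V} (hPmem : ∀ u : V, P u ∈ X)
    (hPorth : ∀ u : V, ∀ v ∈ X, A (u - P u) v = 0) (v : V) :
    (A (P v) (P v)).re ≤ (A v v).re := by
  have hperp := hPorth v (P v) (hPmem v)
  simpa using re_sesq_self_le_add_of_orthogonal A (by rw [hAherm, hperp, map_zero]) hperp
    (hApos (v - P v))

lemma linearIndependent_of_sesq_orthonormal {ι : Type*} [Fintype ι] [DecidableEq ι]
    {ψ : ι → V} (hψ : ∀ i j, A (ψ i) (ψ j) = if i = j then 1 else 0) :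
    LinearIndependent ℂ ψ := by
  rw [Fintype.linearIndependent_iff]
  intro g hg j
  simpa [map_sum, hψ, Finset.sum_ite_eq'] using congrArg (A (ψ j)) hg

end Sesquilinear

lemma bddAbove_image_compl_zero_of_smul_invariant {𝕜 E : Type*} [RCLike 𝕜]
    [NormedAddCommGroup E] [NormedSpace 𝕜 E] [ProperSpace E] {q : E → ℝ}
    (hq : ContinuousOn q {0}ᶜ) (hsmul : ∀ (c : 𝕜) (v : E), c ≠ 0 → q (c • v) = q v) :
    BddAbove (q '' {0}ᶜ) := by
  have hsphere : Metric.sphere (0 : E) 1 ⊆ {0}ᶜ := fun v hv h0 => by simp_all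
  refine ((isCompact_sphere (0 : E) 1).bddAbove_image (hq.mono hsphere)).mono ?_
  rintro _ ⟨v, hv, rfl⟩
  have hv : v ≠ 0 := hv
  refine ⟨((‖v‖ : 𝕜))⁻¹ • v, by simpa using norm_smul_inv_norm (𝕜 := 𝕜) hv, hsmul _ _ ?_⟩
  simpa using hv

lemma finrank_map_of_injOn {K M N : Type*} [Field K] [AddCommGroup M] [Module K M]
    [AddCommGroup N] [Module K N] {f : M →ₗ[K] N} {p : Submodule K M} (hf : Set.InjOn f p) :
    Module.finrank K (p.map f) = Module.finrank K p := by
  rw [← LinearMap.range_domRestrict, LinearMap.finrank_range_of_inj]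
  exact fun x y hxy => Subtype.ext (hf x.2 y.2 hxy)

section Eigen

variable {V : Type*} [AddCommGroup V] [Module ℂ V] (A B : V →ₗ⋆[ℂ] V →ₗ[ℂ] ℂ)
  {ι : Type*} [Fintype ι] {ψ : ι → V}

lemma re_sesq_self_le_of_mem_span_eigenvectors [DecidableEq ι] (hψ : ∀ i j, B (ψ i) (ψ j) = if i = j then 1 else 0)
    {lam : ι → ℝ} (heig : ∀ i, ∀ v : V, A (ψ i) v = (lam i : ℂ) * B (ψ i) v) {μ : ℝ}
    (hμ : ∀ i, lam i ≤ μ) {v : V} (hv : v ∈ Submodule.span ℂ (Set.range ψ)) :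
    (A v v).re ≤ μ * (B v v).re := by
  obtain ⟨c, rfl⟩ := (Submodule.mem_span_range_iff_exists_fun ℂ).mp hv
  have hA : ∀ i j, A (ψ i) (ψ j) = if i = j then (lam i : ℂ) else 0 := fun i j => by
    simp [heig, hψ]
  rw [re_sesq_sum_smul_self_of_diagonal A c ψ lam hA,
    re_sesq_sum_smul_self_of_diagonal B c ψ 1 (by simpa using hψ), Finset.mul_sum]
  refine Finset.sum_le_sum fun i _ => ?_
  simpa [mul_comm] using mul_le_mul_of_nonneg_left (hμ i) (normSq_nonneg (c i))

lemma bddAbove_ratio_on_span_of_injOn (hBpos : ∀ x : V, x ≠ 0 → 0 < (B x x).re)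
    (hψ : LinearIndependent ℂ ψ) {P : V →ₗ[ℂ] V}
    (hinj : Set.InjOn P (Submodule.span ℂ (Set.range ψ) : Set V)) :
    BddAbove {s : ℝ | ∃ v ∈ Submodule.span ℂ (Set.range ψ), v ≠ 0 ∧
      s = (B v v).re / (B (P v) (P v)).re} := by
  set comb : (ι → ℂ) → V := fun c => ∑ i, c i • ψ i
  have hP : ∀ c, P (comb c) = ∑ i, c i • P (ψ i) := fun c => by simp [comb]
  have hcomb : ∀ c, c ≠ 0 → P (comb c) ≠ 0 := by
    intro c hc hPc
    have hc0 : comb c = 0 :=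
      hinj ((Submodule.mem_span_range_iff_exists_fun ℂ).mpr ⟨c, rfl⟩) (Submodule.zero_mem _)
        (by rwa [map_zero])
    exact hc (funext (Fintype.linearIndependent_iff.mp hψ c hc0))
  let q : (ι → ℂ) → ℝ := fun c => (B (comb c) (comb c)).re / (B (P (comb c)) (P (comb c))).re
  have hq : ContinuousOn q {0}ᶜ := by
    refine ContinuousOn.div ?_ ?_ fun c hc => (hBpos _ (hcomb c hc)).ne'
    · exact (continuous_re.comp (continuous_sesq_sum_smul_self B ψ)).continuousOn
    · refine (continuous_re.comp ((continuous_sesq_sum_smul_self B (P ∘ ψ)).congr ?_)).continuousOn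
      simp [hP]
  have hsmul : ∀ (a : ℂ) c, a ≠ 0 → q (a • c) = q c := fun a c ha => by
    have : comb (a • c) = a • comb c := by simp [comb, Finset.smul_sum, smul_smul]
    simp only [q]
    rw [this, P.map_smul, re_sesq_smul_self, re_sesq_smul_self]
    exact mul_div_mul_left _ _ (normSq_pos.mpr ha).ne'
  refine (bddAbove_image_compl_zero_of_smul_invariant hq hsmul).mono ?_
  rintro _ ⟨v, hv, hv0, rfl⟩
  obtain ⟨c, rfl⟩ := (Submodule.mem_span_range_iff_exists_fun ℂ).mp hv
  exact ⟨c, fun hc => hv0 (by simp [Set.mem_singleton_iff.mp hc]), rfl⟩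

end Eigen

theorem stmt7_general {V : Type*} [NormedAddCommGroup V] [InnerProductSpace ℂ V]
    (A B : V →ₗ⋆[ℂ] V →ₗ[ℂ] ℂ)
    (hAherm : ∀ x y : V, A y x = (starRingEnd ℂ) (A x y))
    (hApos : ∀ x : V, 0 ≤ (A x x).re)
    (hBpos : ∀ x : V, x ≠ 0 → 0 < (B x x).re)
    (n : ℕ) (ψ : Fin (n + 1) → V) (lam : Fin (n + 1) → ℝ)
    (hBon : ∀ i j, B (ψ i) (ψ j) = if i = j then 1 else 0)
    (heig : ∀ i, ∀ v : V, A (ψ i) v = (lam i : ℂ) * B (ψ i) v)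
    (hpos : ∀ i, 0 < lam i) (hmono : Monotone lam)
    (X : Submodule ℂ V)
    (P : V →ₗ[ℂ] V) (hPmem : ∀ u : V, P u ∈ X)
    (hPorth : ∀ u : V, ∀ v ∈ X, A (u - P u) v = 0)
    (hinj : Set.InjOn P (Submodule.span ℂ (Set.range ψ) : Set V)) :
    sInf {t : ℝ | ∃ W : Submodule ℂ V, W ≤ X ∧ Module.finrank ℂ W = n + 1 ∧
        t = sSup {s : ℝ | ∃ v ∈ W, v ≠ 0 ∧ s = (A v v).re / (B v v).re}}
    ≤ lam (Fin.last n) *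
      sSup {s : ℝ | ∃ v ∈ Submodule.span ℂ (Set.range ψ), v ≠ 0 ∧
        s = (B v v).re / (B (P v) (P v)).re} := by
  set E := Submodule.span ℂ (Set.range ψ)
  have hli := linearIndependent_of_sesq_orthonormal B hBon
  have hWX : E.map P ≤ X := Submodule.map_le_iff_le_comap.mpr fun u _ => hPmem u
  have hrank : Module.finrank ℂ (E.map P) = n + 1 := by
    rw [finrank_map_of_injOn hinj, finrank_span_eq_card hli, Fintype.card_fin]
  have hBnonneg : ∀ v : V, 0 ≤ (B v v).re := fun v => by
    rcases eq_or_ne v 0 with rfl | hv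
    · simp
    · exact (hBpos v hv).le
  have hT := bddAbove_ratio_on_span_of_injOn B hBpos hli hinj
  have hlam := (hpos (Fin.last n)).le
  refine (csInf_le ?_ (by exact ⟨E.map P, hWX, hrank, rfl⟩)).trans (Real.sSup_le ?_ ?_)
  · refine ⟨0, ?_⟩
    rintro _ ⟨W, -, -, rfl⟩
    refine Real.sSup_nonneg ?_
    rintro _ ⟨v, -, -, rfl⟩
    exact div_nonneg (hApos v) (hBnonneg v)
  · rintro _ ⟨_, ⟨v, hv, rfl⟩, hPv, rfl⟩
    have hv0 : v ≠ 0 := fun h => hPv (by rw [h, map_zero])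
    calc (A (P v) (P v)).re / (B (P v) (P v)).re
        ≤ lam (Fin.last n) * (B v v).re / (B (P v) (P v)).re := by
          refine div_le_div_of_nonneg_right ?_ (hBnonneg _)
          exact (re_sesq_self_le_of_orthogonalProjection A hAherm hApos hPmem hPorth v).trans
            (re_sesq_self_le_of_mem_span_eigenvectors A B hBon heig (fun i => hmono i.le_last) hv)
      _ ≤ lam (Fin.last n) * sSup _ := by
          rw [mul_div_assoc]
          exact mul_le_mul_of_nonneg_left (le_csSup hT ⟨v, hv, hv0, rfl⟩) hlam
  · refine mul_nonneg hlam (Real.sSup_nonneg ?_)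
    rintro _ ⟨v, -, -, rfl⟩
    exact div_nonneg (hBnonneg v) (hBnonneg (P v))

/-- upper bound for the discrete minimax eigenvalue via the projected
eigenspace. Here `l = n + 1`. -/
theorem stmt7 {V : Type*} [NormedAddCommGroup V] [InnerProductSpace ℂ V]
    (A B : V →ₗ⋆[ℂ] V →ₗ[ℂ] ℂ)
    (hAherm : ∀ x y : V, A y x = (starRingEnd ℂ) (A x y))
    (hBherm : ∀ x y : V, B y x = (starRingEnd ℂ) (B x y))
    (hApos : ∀ x : V, 0 ≤ (A x x).re)
    (hBpos : ∀ x : V, x ≠ 0 → 0 < (B x x).re)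
    (n : ℕ) (ψ : Fin (n + 1) → V) (lam : Fin (n + 1) → ℝ)
    (hBon : ∀ i j, B (ψ i) (ψ j) = if i = j then 1 else 0)
    (heig : ∀ i, ∀ v : V, A (ψ i) v = (lam i : ℂ) * B (ψ i) v)
    (hpos : ∀ i, 0 < lam i) (hmono : Monotone lam)
    (X : Submodule ℂ V) [FiniteDimensional ℂ X]
    (P : V →ₗ[ℂ] V) (hPmem : ∀ u : V, P u ∈ X)
    (hPorth : ∀ u : V, ∀ v ∈ X, A (u - P u) v = 0)
    (hinj : Set.InjOn P (Submodule.span ℂ (Set.range ψ) : Set V)) :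
    sInf {t : ℝ | ∃ W : Submodule ℂ V, W ≤ X ∧ Module.finrank ℂ W = n + 1 ∧
        t = sSup {s : ℝ | ∃ v ∈ W, v ≠ 0 ∧ s = (A v v).re / (B v v).re}}
    ≤ lam (Fin.last n) *
      sSup {s : ℝ | ∃ v ∈ Submodule.span ℂ (Set.range ψ), v ≠ 0 ∧
        s = (B v v).re / (B (P v) (P v)).re} :=
  stmt7_general A B hAherm hApos hBpos n ψ lam hBon heig hpos hmono X P hPmem hPorth hinj
end

section
/- With the same setup, if moreover v ∈ E with max_{0≠v∈E} (B(v,v) − B(Πv,Πv))/B(v,v) ≤ ε < 1/2, then λˡ ≤ λ_N^l ≤ λˡ(1 + 2ε). -/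
/-- two-sided bound `λˡ ≤ λ_N^l ≤ λˡ(1 + 2ε)` under a relative
B-norm-loss bound on the projected eigenspace. Here `l = n + 1`. -/
theorem stmt8 {V : Type*} [NormedAddCommGroup V] [InnerProductSpace ℂ V]
    (A B : V →ₗ⋆[ℂ] V →ₗ[ℂ] ℂ)
    (hAherm : ∀ x y : V, A y x = (starRingEnd ℂ) (A x y))
    (hBherm : ∀ x y : V, B y x = (starRingEnd ℂ) (B x y))
    (hApos : ∀ x : V, 0 ≤ (A x x).re)
    (hBpos : ∀ x : V, x ≠ 0 → 0 < (B x x).re)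
    (n : ℕ) (ψ : Fin (n + 1) → V) (lam : Fin (n + 1) → ℝ)
    (hBon : ∀ i j, B (ψ i) (ψ j) = if i = j then 1 else 0)
    (heig : ∀ i, ∀ v : V, A (ψ i) v = (lam i : ℂ) * B (ψ i) v)
    (hpos : ∀ i, 0 < lam i) (hmono : Monotone lam)
    (X : Submodule ℂ V) [FiniteDimensional ℂ X]
    (P : V →ₗ[ℂ] V) (hPmem : ∀ u : V, P u ∈ X)
    (hPorth : ∀ u : V, ∀ v ∈ X, A (u - P u) v = 0)
    (hinj : Set.InjOn P (Submodule.span ℂ (Set.range ψ) : Set V))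
    (hchar : lam (Fin.last n) =
      sInf {t : ℝ | ∃ W : Submodule ℂ V, Module.finrank ℂ W = n + 1 ∧
        t = sSup {s : ℝ | ∃ v ∈ W, v ≠ 0 ∧ s = (A v v).re / (B v v).re}})
    (ε : ℝ) (hε0 : 0 ≤ ε) (hεlt : ε < 1 / 2)
    (hεbd : ∀ v ∈ Submodule.span ℂ (Set.range ψ), v ≠ 0 →
      ((B v v).re - (B (P v) (P v)).re) / (B v v).re ≤ ε) :
    lam (Fin.last n) ≤
      sInf {t : ℝ | ∃ W : Submodule ℂ V, W ≤ X ∧ Module.finrank ℂ W = n + 1 ∧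
        t = sSup {s : ℝ | ∃ v ∈ W, v ≠ 0 ∧ s = (A v v).re / (B v v).re}}
    ∧ sInf {t : ℝ | ∃ W : Submodule ℂ V, W ≤ X ∧ Module.finrank ℂ W = n + 1 ∧
        t = sSup {s : ℝ | ∃ v ∈ W, v ≠ 0 ∧ s = (A v v).re / (B v v).re}}
      ≤ lam (Fin.last n) * (1 + 2 * ε) := by
  classical
  set E := Submodule.span ℂ (Set.range ψ) with hE
  -- ψ is linearly independent
  have hψli : LinearIndependent ℂ ψ := by
    rw [Fintype.linearIndependent_iff]
    intro g hg i
    have h := congrArg (fun v => B (ψ i) v) hg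
    simp only [map_sum, map_smul, smul_eq_mul, hBon, mul_ite, mul_one, mul_zero,
      Finset.sum_ite_eq, Finset.mem_univ, if_true, map_zero] at h
    exact h
  have hEdim : Module.finrank ℂ E = n + 1 := by
    rw [hE, finrank_span_eq_card hψli]; simp
  -- P is injective on E in the linear sense
  have hPinj : ∀ v ∈ E, P v = 0 → v = 0 := by
    intro v hv hPv
    have : P v = P 0 := by simp [hPv]
    exact hinj hv (Submodule.zero_mem E) this
  set W := E.map P with hW
  have hWX : W ≤ X := by
    rintro w ⟨u, hu, rfl⟩
    exact hPmem u
  have hWdim : Module.finrank ℂ W = n + 1 := by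
    have hf : Function.Injective (P.comp E.subtype) := by
      intro x y hxy
      simp only [LinearMap.comp_apply, Submodule.subtype_apply] at hxy
      exact Subtype.ext (hinj x.2 y.2 hxy)
    have hr : LinearMap.range (P.comp E.subtype) = W := by
      rw [LinearMap.range_comp, Submodule.range_subtype]
    calc Module.finrank ℂ W = Module.finrank ℂ (LinearMap.range (P.comp E.subtype)) := by rw [hr]
      _ = Module.finrank ℂ E := LinearMap.finrank_range_of_inj hf
      _ = n + 1 := hEdim
  -- Rayleigh bound on E
  have hray : ∀ v ∈ E, (A v v).re ≤ lam (Fin.last n) * (B v v).re := by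
    intro v hv
    obtain ⟨c, rfl⟩ := (Submodule.mem_span_range_iff_exists_fun ℂ).mp hv
    have hB : ∀ i, B (ψ i) (∑ j, c j • ψ j) = c i := by
      intro i
      simp [map_sum, map_smul, hBon, mul_ite, Finset.sum_ite_eq]
    have keyB : (B (∑ i, c i • ψ i)) = ∑ i, (starRingEnd ℂ) (c i) • (B (ψ i)) := by
      rw [map_sum]
      exact Finset.sum_congr rfl fun i _ => B.map_smulₛₗ _ _
    have keyA : (A (∑ i, c i • ψ i)) = ∑ i, (starRingEnd ℂ) (c i) • (A (ψ i)) := by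
      rw [map_sum]
      exact Finset.sum_congr rfl fun i _ => A.map_smulₛₗ _ _
    have hBvv : (B (∑ i, c i • ψ i)) (∑ i, c i • ψ i)
        = ∑ i, (starRingEnd ℂ) (c i) * c i := by
      rw [keyB, LinearMap.sum_apply]
      simp only [LinearMap.smul_apply, smul_eq_mul, hB]
    have hAvv : (A (∑ i, c i • ψ i)) (∑ i, c i • ψ i)
        = ∑ i, (starRingEnd ℂ) (c i) * ((lam i : ℂ) * c i) := by
      rw [keyA, LinearMap.sum_apply]
      simp only [LinearMap.smul_apply, smul_eq_mul, heig, hB]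
    rw [hBvv, hAvv, Complex.re_sum, Complex.re_sum]
    have h1 : ∀ i : Fin (n+1), ((starRingEnd ℂ) (c i) * ((lam i : ℂ) * c i)).re
        = lam i * Complex.normSq (c i) := by
      intro i
      simp [Complex.mul_re, Complex.mul_im, Complex.normSq_apply]
      ring
    have h2 : ∀ i : Fin (n+1), ((starRingEnd ℂ) (c i) * c i).re
        = Complex.normSq (c i) := by
      intro i
      simp [Complex.mul_re, Complex.normSq_apply]
    simp only [h1, h2, Finset.mul_sum]
    refine Finset.sum_le_sum fun i _ => ?_
    exact mul_le_mul_of_nonneg_right (hmono (Fin.le_last i)) (Complex.normSq_nonneg _)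
  -- Galerkin orthogonality: (A (P v) (P v)).re ≤ (A v v).re
  have hgal : ∀ v : V, (A (P v) (P v)).re ≤ (A v v).re := by
    intro v
    have h0 : A (v - P v) (P v) = 0 := hPorth v (P v) (hPmem v)
    have hsub1 : (A (v - P v)) = A v - A (P v) := map_sub A v (P v)
    have h0e : A v (P v) = A (P v) (P v) := by
      rw [hsub1, LinearMap.sub_apply, sub_eq_zero] at h0
      exact h0
    have hre : (A (P v) v).re = (A (P v) (P v)).re := by
      rw [hAherm v (P v), h0e, Complex.conj_re]
    have hpos' := hApos (v - P v)
    have hexpand : ((A (v - P v)) (v - P v)).re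
        = (A v v).re - (A (P v) v).re - ((A v (P v)).re - (A (P v) (P v)).re) := by
      simp only [hsub1, LinearMap.sub_apply, map_sub, Complex.sub_re]
    rw [hexpand, h0e] at hpos'
    simp only [sub_self, sub_zero] at hpos'
    linarith
  -- nonnegativity of elements of the big set
  have hnonneg : ∀ t ∈ {t : ℝ | ∃ W : Submodule ℂ V, Module.finrank ℂ W = n + 1 ∧
        t = sSup {s : ℝ | ∃ v ∈ W, v ≠ 0 ∧ s = (A v v).re / (B v v).re}}, (0:ℝ) ≤ t := by
    rintro t ⟨W', _, rfl⟩
    refine Real.sSup_nonneg ?_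
    rintro s ⟨v, _, hv0, rfl⟩
    exact div_nonneg (hApos v) (hBpos v hv0).le
  have hbddAll : BddBelow {t : ℝ | ∃ W : Submodule ℂ V, Module.finrank ℂ W = n + 1 ∧
        t = sSup {s : ℝ | ∃ v ∈ W, v ≠ 0 ∧ s = (A v v).re / (B v v).re}} :=
    ⟨0, hnonneg⟩
  have hsub : {t : ℝ | ∃ W : Submodule ℂ V, W ≤ X ∧ Module.finrank ℂ W = n + 1 ∧
        t = sSup {s : ℝ | ∃ v ∈ W, v ≠ 0 ∧ s = (A v v).re / (B v v).re}}
      ⊆ {t : ℝ | ∃ W : Submodule ℂ V, Module.finrank ℂ W = n + 1 ∧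
        t = sSup {s : ℝ | ∃ v ∈ W, v ≠ 0 ∧ s = (A v v).re / (B v v).re}} := by
    rintro t ⟨W', _, h1, h2⟩
    exact ⟨W', h1, h2⟩
  -- the witness t_W
  set tW := sSup {s : ℝ | ∃ v ∈ W, v ≠ 0 ∧ s = (A v v).re / (B v v).re} with htW
  have htWmem : tW ∈ {t : ℝ | ∃ W : Submodule ℂ V, W ≤ X ∧ Module.finrank ℂ W = n + 1 ∧
        t = sSup {s : ℝ | ∃ v ∈ W, v ≠ 0 ∧ s = (A v v).re / (B v v).re}} :=
    ⟨W, hWX, hWdim, rfl⟩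
  -- bound on tW
  have hlampos : 0 < lam (Fin.last n) := hpos _
  have htWle : tW ≤ lam (Fin.last n) * (1 + 2 * ε) := by
    refine csSup_le ?_ ?_
    · -- nonempty: P (ψ 0) works
      have hψ0 : ψ 0 ∈ E := Submodule.subset_span ⟨0, rfl⟩
      have hψ0ne : ψ 0 ≠ 0 := by
        intro h
        have := hBon 0 0
        rw [h] at this
        simp at this
      have hP0 : P (ψ 0) ≠ 0 := fun h => hψ0ne (hPinj _ hψ0 h)
      exact ⟨_, ⟨P (ψ 0), ⟨ψ 0, hψ0, rfl⟩, hP0, rfl⟩⟩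
    · rintro s ⟨w, ⟨v, hv, rfl⟩, hw0, rfl⟩
      have hv0 : v ≠ 0 := by rintro rfl; simp at hw0
      have hBvv : 0 < (B v v).re := hBpos v hv0
      have hBP : 0 < (B (P v) (P v)).re := hBpos _ hw0
      have hBge : (1 - ε) * (B v v).re ≤ (B (P v) (P v)).re := by
        have h := hεbd v hv hv0
        rw [div_le_iff₀ hBvv] at h
        linarith
      have hA1 : (A (P v) (P v)).re ≤ lam (Fin.last n) * (B v v).re :=
        (hgal v).trans (hray v hv)
      rw [div_le_iff₀ hBP]
      nlinarith [hApos (P v), mul_pos hlampos hBvv,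
        mul_le_mul_of_nonneg_left hBge
          (by positivity : (0:ℝ) ≤ lam (Fin.last n) * (1 + 2 * ε)),
        mul_nonneg (mul_nonneg hlampos.le hBvv.le)
          (mul_nonneg hε0 (by linarith : (0:ℝ) ≤ 1 - 2 * ε))]
  constructor
  · rw [hchar]
    exact csInf_le_csInf hbddAll ⟨tW, htWmem⟩ hsub
  · exact (csInf_le ⟨0, fun t ht => hnonneg t (hsub ht)⟩ htWmem).trans htWle
end

section
/- For the basis function φ_i(r) = (1−r)² r² J^{2,1}_{i−4}(2r−1) with i ≥ 4, where J^{α,β}_n denotes the Jacobi polynomial, there holds the expansion φ_i''(r) = [(i−3)(i−1)i / (2(2i−3))] J^{0,1}_{i−2}(2r−1) + [2(i−3)²(i−2)(i−1) / ((2i−3)(2i−5))] J^{0,1}_{i−3}(2r−1) + [(i−4)(i−3)² / (2(2i−5))] J^{0,1}_{i−4}(2r−1). -/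
/-!
Under `x = 2r - 1`, a Jacobi polynomial `J^{a,b}_n` with natural parameters becomes a polynomial
in `r` whose coefficients are signed products of two binomial coefficients. Their contiguity
relations (in the index `k`, the degree `n` and the parameter `a`) express the coefficient of `r^j`
of every polynomial in the claim as the coefficient of `r^j` in `J^{0,1}_{i-2}(2r-1)` times a
rational function of `i` and `j`, so comparing coefficients reduces the claim to an identity of
rational functions.
-/

/-- The (generalized) Jacobi polynomial `J_n^{α,β}`, via its hypergeometric-type expansion. -/
noncomputable def jacobiP (α β : ℝ) (n : ℕ) (x : ℝ) : ℝ :=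
  ∑ k ∈ Finset.range (n + 1),
    ((ascPochhammer ℝ (n - k)).eval (-(n : ℝ) - β) * (ascPochhammer ℝ k).eval ((n : ℝ) + α + β + 1))
      / ((Nat.factorial (n - k) : ℝ) * (Nat.factorial k : ℝ)) * ((x + 1) / 2) ^ k

open Polynomial Finset

theorem cast_choose_mul_add_one {R : Type*} [Ring R] (N K : ℕ) :
    (N.choose K : R) * (N + 1) = ((N + 1).choose K : R) * (N + 1 - K) := by
  rcases le_or_gt K (N + 1) with hK | hK
  · have h := congrArg (Nat.cast (R := R)) (Nat.choose_mul_succ_eq N K)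
    push_cast [Nat.cast_sub hK] at h
    exact h
  · simp [Nat.choose_eq_zero_of_lt hK, Nat.choose_eq_zero_of_lt (Nat.lt_of_succ_lt hK)]

theorem cast_choose_succ_mul {R : Type*} [Ring R] (N K : ℕ) :
    (N.choose (K + 1) : R) * (K + 1) = (N.choose K : R) * (N - K) := by
  rcases le_or_gt K N with hK | hK
  · have h := congrArg (Nat.cast (R := R)) (Nat.choose_succ_right_eq N K)
    push_cast [Nat.cast_sub hK] at h
    exact h
  · simp [Nat.choose_eq_zero_of_lt hK, Nat.choose_eq_zero_of_lt (Nat.lt_succ_of_lt hK)]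

/-- The coefficient of `r ^ k` in `J^{a,b}_n(2r - 1)`. The first binomial is `C(n + b, n - k)`
written as `C(n + b, k + b)`, which also vanishes for `k > n`. -/
noncomputable def jacobiCoeff (a b n k : ℕ) : ℝ :=
  (-1) ^ (n + k) * (n + b).choose (k + b) * (n + a + b + k).choose (n + a + b)

noncomputable def shiftedJacobi (a b n : ℕ) : ℝ[X] :=
  ∑ k ∈ range (n + 1), C (jacobiCoeff a b n k) * X ^ k

theorem jacobiCoeff_eq_zero_of_lt {a b n k : ℕ} (h : n < k) : jacobiCoeff a b n k = 0 := by
  simp [jacobiCoeff, Nat.choose_eq_zero_of_lt (by omega : n + b < k + b)]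

theorem coeff_shiftedJacobi (a b n k : ℕ) :
    (shiftedJacobi a b n).coeff k = jacobiCoeff a b n k := by
  simp only [shiftedJacobi, finsetSum_coeff, coeff_C_mul_X_pow, sum_ite_eq, mem_range]
  split_ifs with hk
  · rfl
  · exact (jacobiCoeff_eq_zero_of_lt (by omega)).symm

theorem jacobiP_natCast_two_mul_sub_one (a b n : ℕ) (r : ℝ) :
    jacobiP a b n (2 * r - 1) = (shiftedJacobi a b n).eval r := by
  simp only [jacobiP, shiftedJacobi, eval_finsetSum, eval_mul, eval_C, eval_pow, eval_X]
  refine sum_congr rfl fun k hk => ?_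
  have hkn : k ≤ n := Nat.lt_succ_iff.mp (mem_range.mp hk)
  rw [show -(n : ℝ) - b = -((n + b : ℕ) : ℝ) by push_cast; ring,
    show (n : ℝ) + a + b + 1 = ((n + a + b + 1 : ℕ) : ℝ) by push_cast; ring,
    ascPochhammer_eval_neg_eq_descPochhammer, descPochhammer_eval_eq_descFactorial,
    ← ascPochhammer_eval_cast, ascPochhammer_nat_eq_ascFactorial,
    Nat.descFactorial_eq_factorial_mul_choose, Nat.ascFactorial_eq_factorial_mul_choose,
    Nat.choose_symm_of_eq_add (show n + b = (n - k) + (k + b) by omega),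
    Nat.choose_symm_of_eq_add (show n + a + b + k = k + (n + a + b) by omega),
    show (2 * r - 1 + 1) / 2 = r by ring]
  obtain ⟨d, rfl⟩ := Nat.exists_eq_add_of_le hkn
  have hsign : ((-1 : ℝ) ^ (k + d + k)) = (-1) ^ d := by
    rw [show k + d + k = d + 2 * k by ring, pow_add, pow_mul]; norm_num
  rw [jacobiCoeff, hsign, show k + d - k = d by omega]
  have := Nat.factorial_ne_zero d
  have := Nat.factorial_ne_zero k
  push_cast
  field_simp

theorem jacobiCoeff_succ_mul (a b n k : ℕ) :
    jacobiCoeff a b n (k + 1) * ((k + 1) * (k + b + 1))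
      = -(jacobiCoeff a b n k * ((n - k) * (n + a + b + k + 1))) := by
  have h₁ := cast_choose_succ_mul (R := ℝ) (n + b) (k + b)
  have h₂ := cast_choose_mul_add_one (R := ℝ) (n + a + b + k) (n + a + b)
  rw [jacobiCoeff, jacobiCoeff, ← add_assoc, add_right_comm k 1 b, pow_succ]
  push_cast at h₁ h₂ ⊢
  linear_combination (-1) ^ (n + k) * (((n + b).choose (k + b) : ℝ) * (n - k) * h₂
    - ((n + a + b + k + 1).choose (n + a + b) : ℝ) * (k + 1) * h₁)

theorem jacobiCoeff_add_one_left_mul (a b n k : ℕ) :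
    jacobiCoeff (a + 1) b n k * (n + b + 1) = -(jacobiCoeff a b (n + 1) k * (n + 1 - k)) := by
  have h := cast_choose_mul_add_one (R := ℝ) (n + b) (k + b)
  rw [jacobiCoeff, jacobiCoeff, add_right_comm n 1 b, add_right_comm n 1 a,
    ← add_assoc n a 1, add_right_comm (n + a) 1 b, add_right_comm n 1 k, pow_succ]
  push_cast at h ⊢
  linear_combination (-1) ^ (n + k) * ((n + a + b + 1 + k).choose (n + a + b + 1) : ℝ) * h

theorem jacobiCoeff_mul_add_one_degree (a b n k : ℕ) :
    jacobiCoeff a b n k * ((n + b + 1) * (n + a + b + k + 1))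
      = -(jacobiCoeff a b (n + 1) k * ((n + 1 - k) * (n + a + b + 1))) := by
  have h₁ := cast_choose_mul_add_one (R := ℝ) (n + b) (k + b)
  have h₂ : ((n + a + b + k + 1 : ℕ) : ℝ) * (n + a + b + k).choose (n + a + b)
      = (n + a + b + k + 1).choose (n + a + b + 1) * ((n + a + b + 1 : ℕ) : ℝ) := by
    exact_mod_cast Nat.add_one_mul_choose_eq (n + a + b + k) (n + a + b)
  rw [jacobiCoeff, jacobiCoeff, add_right_comm n 1 b, add_right_comm n 1 a,
    add_right_comm (n + a) 1 b, add_right_comm (n + a + b) 1 k, add_right_comm n 1 k, pow_succ]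
  push_cast at h₁ h₂ ⊢
  linear_combination (-1) ^ (n + k) * (((n + a + b + k).choose (n + a + b) : ℝ)
    * (n + a + b + k + 1) * h₁ + ((n + b + 1).choose (k + b) : ℝ) * (n + 1 - k) * h₂)

section Normalization

variable (n j : ℕ)

theorem jacobiCoeff_two_one_eq :
    jacobiCoeff 2 1 n j
      = jacobiCoeff 0 1 (n + 2) j * ((n + 2 - j) * (n + 1 - j) / ((n + 3) * (n + 2))) := by
  have h₁ := jacobiCoeff_add_one_left_mul 1 1 n j
  have h₂ := jacobiCoeff_add_one_left_mul 0 1 (n + 1) j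
  push_cast at h₁ h₂
  field_simp
  linear_combination (n + 3 : ℝ) * h₁ - (n + 1 - j : ℝ) * h₂

theorem jacobiCoeff_zero_one_add_one_eq :
    jacobiCoeff 0 1 (n + 1) j = -(jacobiCoeff 0 1 (n + 2) j * ((n + 2 - j) / (n + 3 + j))) := by
  have h := jacobiCoeff_mul_add_one_degree 0 1 (n + 1) j
  rw [← eq_div_iff (by positivity)] at h
  rw [h]
  push_cast
  field_simp
  ring

theorem jacobiCoeff_zero_one_eq :
    jacobiCoeff 0 1 n j
      = jacobiCoeff 0 1 (n + 2) j * ((n + 2 - j) * (n + 1 - j) / ((n + 3 + j) * (n + 2 + j))) := by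
  have h := jacobiCoeff_mul_add_one_degree 0 1 n j
  rw [← eq_div_iff (by positivity), jacobiCoeff_zero_one_add_one_eq] at h
  rw [h]
  push_cast
  field_simp
  ring

theorem coeff_X_mul_shiftedJacobi_two_one :
    (X * shiftedJacobi 2 1 n).coeff j
      = -(jacobiCoeff 0 1 (n + 2) j
          * ((j + 1) * (n + 2 - j) * j / ((n + 3) * (n + 2) * (n + 3 + j)))) := by
  rcases j with _ | i
  · simp
  · have h := jacobiCoeff_succ_mul 0 1 (n + 2) i
    rw [← eq_div_iff (by positivity)] at h
    rw [coeff_X_mul, coeff_shiftedJacobi, jacobiCoeff_two_one_eq, h]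
    push_cast
    field_simp
    ring

theorem coeff_X_sq_mul_shiftedJacobi_two_one :
    (X ^ 2 * shiftedJacobi 2 1 n).coeff j
      = jacobiCoeff 0 1 (n + 2) j
          * ((j + 1) * j * j * (j - 1) / ((n + 3) * (n + 2) * (n + 3 + j) * (n + 2 + j))) := by
  rcases j with _ | _ | i
  · simp
  · simp [coeff_X_pow_mul']
  · have h₁ := jacobiCoeff_succ_mul 0 1 (n + 2) i
    have h₂ := jacobiCoeff_succ_mul 0 1 (n + 2) (i + 1)
    rw [← eq_div_iff (by positivity)] at h₁ h₂
    rw [coeff_X_pow_mul, coeff_shiftedJacobi, jacobiCoeff_two_one_eq, h₂, h₁]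
    push_cast
    field_simp
    ring

end Normalization

theorem derivative_derivative_X_sq_mul_one_sub_X_sq_mul_shiftedJacobi (n : ℕ) :
    derivative (derivative (X ^ 2 * (1 - X) ^ 2 * shiftedJacobi 2 1 n))
      = C (((n : ℝ) + 1) * (n + 3) * (n + 4) / (2 * (2 * n + 5))) * shiftedJacobi 0 1 (n + 2)
        + C (2 * ((n : ℝ) + 1) ^ 2 * (n + 2) * (n + 3) / ((2 * n + 5) * (2 * n + 3)))
          * shiftedJacobi 0 1 (n + 1)
        + C ((n : ℝ) * (n + 1) ^ 2 / (2 * (2 * n + 3))) * shiftedJacobi 0 1 n := by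
  have hφ : X ^ 2 * (1 - X) ^ 2 * shiftedJacobi 2 1 n = X ^ 2 * (shiftedJacobi 2 1 n
      - C 2 * (X * shiftedJacobi 2 1 n) + X ^ 2 * shiftedJacobi 2 1 n) := by
    rw [C_ofNat]; ring
  ext j
  rw [hφ, coeff_derivative, coeff_derivative, coeff_X_pow_mul]
  simp only [coeff_add, coeff_sub, coeff_C_mul, coeff_shiftedJacobi]
  rw [coeff_X_mul_shiftedJacobi_two_one, coeff_X_sq_mul_shiftedJacobi_two_one,
    jacobiCoeff_two_one_eq, jacobiCoeff_zero_one_add_one_eq n j, jacobiCoeff_zero_one_eq n j]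
  push_cast
  generalize jacobiCoeff 0 1 (n + 2) j = T
  field_simp
  ring

/-- expansion of `φ_i''` in the Jacobi basis `J^{0,1}`. -/
theorem stmt9 (i : ℕ) (hi : 4 ≤ i) (r : ℝ) :
    deriv (deriv (fun s : ℝ => (1 - s) ^ 2 * s ^ 2 * jacobiP 2 1 (i - 4) (2 * s - 1))) r
    = ((i : ℝ) - 3) * ((i : ℝ) - 1) * (i : ℝ) / (2 * (2 * (i : ℝ) - 3))
        * jacobiP 0 1 (i - 2) (2 * r - 1)
      + 2 * ((i : ℝ) - 3) ^ 2 * ((i : ℝ) - 2) * ((i : ℝ) - 1)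
          / ((2 * (i : ℝ) - 3) * (2 * (i : ℝ) - 5)) * jacobiP 0 1 (i - 3) (2 * r - 1)
      + ((i : ℝ) - 4) * ((i : ℝ) - 3) ^ 2 / (2 * (2 * (i : ℝ) - 5))
          * jacobiP 0 1 (i - 4) (2 * r - 1) := by
  obtain ⟨n, rfl⟩ := Nat.exists_eq_add_of_le' hi
  rw [Nat.add_sub_cancel, show n + 4 - 2 = n + 2 by omega, show n + 4 - 3 = n + 1 by omega]
  have hφ : (fun s : ℝ => (1 - s) ^ 2 * s ^ 2 * jacobiP 2 1 n (2 * s - 1))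
      = fun s => (X ^ 2 * (1 - X) ^ 2 * shiftedJacobi 2 1 n).eval s := by
    ext s
    have h := jacobiP_natCast_two_mul_sub_one 2 1 n s
    push_cast at h
    simp only [h, eval_mul, eval_pow, eval_sub, eval_one, eval_X]
    ring
  have hψ (m : ℕ) : jacobiP 0 1 m (2 * r - 1) = (shiftedJacobi 0 1 m).eval r := by
    exact_mod_cast jacobiP_natCast_two_mul_sub_one 0 1 m r
  have hderiv (p : ℝ[X]) : deriv (fun s => p.eval s) = fun s => p.derivative.eval s :=
    funext fun _ => Polynomial.deriv p
  rw [hφ, hderiv, hderiv, derivative_derivative_X_sq_mul_one_sub_X_sq_mul_shiftedJacobi,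
    hψ, hψ, hψ]
  simp only [eval_add, eval_mul, eval_C]
  push_cast
  ring
end

section
/- In polar coordinates the 2D Laplacian applied to a separated function u_m(r)e^{imθ} on the ellipse-mapped coordinates (x,y) = (a r cos θ, b r sin θ) satisfies Δ[u_m(r)e^{imθ}] = (1/2)(1/a² + 1/b²) L_m u_m(r) e^{imθ} + (1/4)(1/a² − 1/b²)[K_m u_m(r) e^{i(m+2)θ} + K_{−m} u_m(r) e^{i(m−2)θ}], where L_m = ∂_r² + (1/r)(∂_r − m²/r) and K_m = ∂_r² − ((1+2m)/r)∂_r + (m²+2m)/r². -/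
open Complex

set_option maxHeartbeats 2000000 in
private lemma stmt11_aux (ca cb A B U E P R M i : ℂ) (hR : R ≠ 0) (hP : P ≠ 0)
    (hi : i ^ 2 = -1) :
    (1 / 2 : ℂ) * ca * (A + B / R - (M ^ 2 / R ^ 2) * U) * E
    + (1 / 2 : ℂ) * cb *
        (((P + P⁻¹) / 2) * (A - B / R + (M ^ 2 / R ^ 2) * U) * E
         + (2 * ((P⁻¹ - P) * i / 2) / R) * (i * M * (U / R - B)) * E)
    = (1 / 2 : ℂ) * ca * (A + (1 / R) * (B - (M ^ 2 / R) * U)) * E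
    + (1 / 4 : ℂ) * cb *
        ((A - ((1 + 2 * M) / R) * B + ((M ^ 2 + 2 * M) / R ^ 2) * U) * (E * P)
         + (A - ((1 - 2 * M) / R) * B + ((M ^ 2 - 2 * M) / R ^ 2) * U) * (E * P⁻¹)) := by
  linear_combination ((1/2) * cb * E * M * (U / R - B) / R * (P⁻¹ - P)) * hi



set_option maxHeartbeats 1000000 in
/-- the elliptic-polar Laplacian of a separated Fourier mode
`u_m(r) e^{imθ}` in terms of the operators `L_m`, `K_m`, `K_{−m}`. -/
theorem stmt11 (a b : ℝ) (ha : 0 < a) (hb : 0 < b) (m : ℤ) (u : ℝ → ℂ)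
    (hu : ContDiffOn ℝ 2 u (Set.Ioo 0 1)) (r θ : ℝ) (hr : r ∈ Set.Ioo (0:ℝ) 1) :
    (1 / 2 : ℂ) * (1 / (a : ℂ) ^ 2 + 1 / (b : ℂ) ^ 2) *
        (deriv (deriv u) r + deriv u r / (r : ℂ) - ((m : ℂ) ^ 2 / (r : ℂ) ^ 2) * u r)
        * Complex.exp (Complex.I * (m : ℂ) * (θ : ℂ))
    + (1 / 2 : ℂ) * (1 / (a : ℂ) ^ 2 - 1 / (b : ℂ) ^ 2) *
        ((Real.cos (2 * θ) : ℂ) *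
            (deriv (deriv u) r - deriv u r / (r : ℂ) + ((m : ℂ) ^ 2 / (r : ℂ) ^ 2) * u r)
            * Complex.exp (Complex.I * (m : ℂ) * (θ : ℂ))
         + (2 * (Real.sin (2 * θ) : ℂ) / (r : ℂ)) *
            (Complex.I * (m : ℂ) * (u r / (r : ℂ) - deriv u r))
            * Complex.exp (Complex.I * (m : ℂ) * (θ : ℂ)))
    = (1 / 2 : ℂ) * (1 / (a : ℂ) ^ 2 + 1 / (b : ℂ) ^ 2) *
        (deriv (deriv u) r + (1 / (r : ℂ)) * (deriv u r - ((m : ℂ) ^ 2 / (r : ℂ)) * u r))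
        * Complex.exp (Complex.I * (m : ℂ) * (θ : ℂ))
    + (1 / 4 : ℂ) * (1 / (a : ℂ) ^ 2 - 1 / (b : ℂ) ^ 2) *
        ((deriv (deriv u) r - ((1 + 2 * (m : ℂ)) / (r : ℂ)) * deriv u r
            + (((m : ℂ) ^ 2 + 2 * (m : ℂ)) / (r : ℂ) ^ 2) * u r)
            * Complex.exp (Complex.I * ((m : ℂ) + 2) * (θ : ℂ))
         + (deriv (deriv u) r - ((1 - 2 * (m : ℂ)) / (r : ℂ)) * deriv u r
            + (((m : ℂ) ^ 2 - 2 * (m : ℂ)) / (r : ℂ) ^ 2) * u r)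
            * Complex.exp (Complex.I * ((m : ℂ) - 2) * (θ : ℂ))) := by

  have hr0 : (r:ℂ) ≠ 0 := by
    exact_mod_cast ne_of_gt hr.1
  have h1 : Complex.exp (Complex.I * ((m : ℂ) + 2) * (θ : ℂ))
      = Complex.exp (Complex.I * (m : ℂ) * (θ : ℂ)) * Complex.exp ((2*θ : ℂ) * Complex.I) := by
    rw [← Complex.exp_add]; ring_nf
  have h2 : Complex.exp (Complex.I * ((m : ℂ) - 2) * (θ : ℂ))
      = Complex.exp (Complex.I * (m : ℂ) * (θ : ℂ)) * (Complex.exp ((2*θ : ℂ) * Complex.I))⁻¹ := by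
    rw [← Complex.exp_neg, ← Complex.exp_add]; ring_nf
  have hc : ((Real.cos (2*θ) : ℂ))
      = (Complex.exp ((2*θ : ℂ) * Complex.I) + (Complex.exp ((2*θ : ℂ) * Complex.I))⁻¹) / 2 := by
    rw [Complex.ofReal_cos, Complex.cos, ← Complex.exp_neg]; push_cast; ring_nf
  have hs : ((Real.sin (2*θ) : ℂ))
      = ((Complex.exp ((2*θ : ℂ) * Complex.I))⁻¹ - Complex.exp ((2*θ : ℂ) * Complex.I)) * Complex.I / 2 := by
    rw [Complex.ofReal_sin, Complex.sin, ← Complex.exp_neg]; push_cast; ring_nf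
  have hPne : Complex.exp ((2*θ : ℂ) * Complex.I) ≠ 0 := Complex.exp_ne_zero _
  rw [h1, h2, hc, hs]
  exact stmt11_aux _ _ _ _ _ _ _ _ _ _ hr0 hPne Complex.I_sq
end

section
/- The fourth-order radial operator factorizes: for m ∈ ℤ and a C⁴ function φ on (0,∞), with ρ denoting the variable, [ρ⁴∂_ρ⁴ + 2ρ³∂_ρ³ + (ρ² − 2m² − 1)ρ²∂_ρ² + (ρ² + 2m² + 1)ρ∂_ρ − (ρ² + 4 − m²)m²] φ = [ρ²∂_ρ² − 3ρ∂_ρ + (4 − m²)][ρ²∂_ρ² + ρ∂_ρ + (ρ² − m²)] φ. -/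
/-!
The inner factor is Bessel's operator of order `m`. On an open set where `φ` is `C⁴`, the
product rule computes its first two derivatives as combinations of `φ, φ', …, φ⁗` with
polynomial coefficients in `ρ`; substituting these into the right-hand side, the identity is a
polynomial identity in `ρ`, `m` and the derivatives of `φ`.
-/

open Filter Topology

section IteratedDeriv

variable {𝕜 : Type*} [NontriviallyNormedField 𝕜] {F : Type*} [NormedAddCommGroup F]
  [NormedSpace 𝕜 F] {f : 𝕜 → F} {x : 𝕜} {k : ℕ}

theorem hasDerivAt_iteratedDeriv (h : DifferentiableAt 𝕜 (iteratedDeriv k f) x) :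
    HasDerivAt (iteratedDeriv k f) (iteratedDeriv (k + 1) f x) x := by
  rw [iteratedDeriv_succ]
  exact h.hasDerivAt

theorem ContDiffOn.differentiableAt_iteratedDeriv {n : WithTop ℕ∞} {U : Set 𝕜}
    (hf : ContDiffOn 𝕜 n f U) (hU : IsOpen U) (hx : x ∈ U) (hk : k < n) :
    DifferentiableAt 𝕜 (iteratedDeriv k f) x :=
  ((hf.differentiableOn_iteratedDerivWithin hk hU.uniqueDiffOn).congr
    fun _ hy => (iteratedDerivWithin_of_isOpen hU hy).symm).differentiableAt (hU.mem_nhds hx)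

end IteratedDeriv

theorem hasDerivAt_ofReal (x : ℝ) : HasDerivAt (fun s : ℝ => (s : ℂ)) 1 x := by
  simpa using (hasDerivAt_id x).ofReal_comp

theorem hasDerivAt_ofReal_sq (x : ℝ) : HasDerivAt (fun s : ℝ => (s : ℂ) ^ 2) (2 * x) x := by
  simpa using (hasDerivAt_ofReal x).fun_pow 2

noncomputable def besselOp (ν : ℂ) (φ : ℝ → ℂ) (s : ℝ) : ℂ :=
  (s : ℂ) ^ 2 * iteratedDeriv 2 φ s + (s : ℂ) * deriv φ s + ((s : ℂ) ^ 2 - ν ^ 2) * φ s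

section Bessel

variable {φ : ℝ → ℂ} {x : ℝ} (ν : ℂ)

theorem hasDerivAt_besselOp (hφ : ∀ k < 3, DifferentiableAt ℝ (iteratedDeriv k φ) x) :
    HasDerivAt (besselOp ν φ)
      ((x : ℂ) ^ 2 * iteratedDeriv 3 φ x + 3 * x * iteratedDeriv 2 φ x
        + (1 + (x : ℂ) ^ 2 - ν ^ 2) * deriv φ x + 2 * x * φ x) x := by
  have d0 := hasDerivAt_iteratedDeriv (hφ 0 (by norm_num))
  have d1 := hasDerivAt_iteratedDeriv (hφ 1 (by norm_num))
  have d2 := hasDerivAt_iteratedDeriv (hφ 2 (by norm_num))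
  simp only [iteratedDeriv_zero, iteratedDeriv_one, Nat.reduceAdd] at d0 d1 d2
  refine ((((hasDerivAt_ofReal_sq x).fun_mul d2).fun_add
    ((hasDerivAt_ofReal x).fun_mul d1)).fun_add
    (((hasDerivAt_ofReal_sq x).sub_const (ν ^ 2)).fun_mul d0)).congr_deriv ?_
  ring

variable {U : Set ℝ}

theorem deriv_besselOp (hφ : ContDiffOn ℝ 3 φ U) (hU : IsOpen U) (hx : x ∈ U) :
    deriv (besselOp ν φ) x = (x : ℂ) ^ 2 * iteratedDeriv 3 φ x + 3 * x * iteratedDeriv 2 φ x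
        + (1 + (x : ℂ) ^ 2 - ν ^ 2) * deriv φ x + 2 * x * φ x :=
  (hasDerivAt_besselOp ν fun _ hk => hφ.differentiableAt_iteratedDeriv hU hx (mod_cast hk)).deriv

theorem iteratedDeriv_two_besselOp (hφ : ContDiffOn ℝ 4 φ U) (hU : IsOpen U) (hx : x ∈ U) :
    iteratedDeriv 2 (besselOp ν φ) x = (x : ℂ) ^ 2 * iteratedDeriv 4 φ x
      + 5 * x * iteratedDeriv 3 φ x + (4 + (x : ℂ) ^ 2 - ν ^ 2) * iteratedDeriv 2 φ x
      + 4 * x * deriv φ x + 2 * φ x := by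
  have hderiv : deriv (besselOp ν φ) =ᶠ[𝓝 x] fun y => (y : ℂ) ^ 2 * iteratedDeriv 3 φ y
      + 3 * y * iteratedDeriv 2 φ y + (1 + (y : ℂ) ^ 2 - ν ^ 2) * deriv φ y + 2 * y * φ y :=
    eventually_of_mem (hU.mem_nhds hx) fun y hy =>
      deriv_besselOp ν (hφ.of_le (by norm_num)) hU hy
  have d : ∀ k < 4, HasDerivAt (iteratedDeriv k φ) (iteratedDeriv (k + 1) φ x) x :=
    fun _ hk => hasDerivAt_iteratedDeriv (hφ.differentiableAt_iteratedDeriv hU hx (mod_cast hk))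
  have d0 := d 0 (by norm_num)
  have d1 := d 1 (by norm_num)
  have d2 := d 2 (by norm_num)
  have d3 := d 3 (by norm_num)
  simp only [iteratedDeriv_zero, iteratedDeriv_one, Nat.reduceAdd] at d0 d1 d2 d3
  rw [iteratedDeriv_succ, iteratedDeriv_one, hderiv.deriv_eq]
  refine (((((hasDerivAt_ofReal_sq x).fun_mul d3).fun_add
    (((hasDerivAt_ofReal x).const_mul 3).fun_mul d2)).fun_add
    (((hasDerivAt_ofReal_sq x).const_add 1 |>.sub_const (ν ^ 2)).fun_mul d1)).fun_add
    (((hasDerivAt_ofReal x).const_mul 2).fun_mul d0)).congr_deriv ?_ |>.deriv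
  ring

end Bessel

/-- factorization of the fourth-order radial operator. -/
theorem stmt17 (m : ℤ) (φ : ℝ → ℂ) (hφ : ContDiffOn ℝ 4 φ (Set.Ioi 0))
    (ρ : ℝ) (hρ : 0 < ρ) :
    (ρ : ℂ) ^ 4 * iteratedDeriv 4 φ ρ + 2 * (ρ : ℂ) ^ 3 * iteratedDeriv 3 φ ρ
      + ((ρ : ℂ) ^ 2 - 2 * (m : ℂ) ^ 2 - 1) * (ρ : ℂ) ^ 2 * iteratedDeriv 2 φ ρ
      + ((ρ : ℂ) ^ 2 + 2 * (m : ℂ) ^ 2 + 1) * (ρ : ℂ) * deriv φ ρ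
      - ((ρ : ℂ) ^ 2 + 4 - (m : ℂ) ^ 2) * (m : ℂ) ^ 2 * φ ρ
    = (ρ : ℂ) ^ 2 * iteratedDeriv 2
          (fun s : ℝ => (s : ℂ) ^ 2 * iteratedDeriv 2 φ s + (s : ℂ) * deriv φ s
            + ((s : ℂ) ^ 2 - (m : ℂ) ^ 2) * φ s) ρ
      - 3 * (ρ : ℂ) * deriv
          (fun s : ℝ => (s : ℂ) ^ 2 * iteratedDeriv 2 φ s + (s : ℂ) * deriv φ s
            + ((s : ℂ) ^ 2 - (m : ℂ) ^ 2) * φ s) ρ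
      + (4 - (m : ℂ) ^ 2) *
          ((ρ : ℂ) ^ 2 * iteratedDeriv 2 φ ρ + (ρ : ℂ) * deriv φ ρ
            + ((ρ : ℂ) ^ 2 - (m : ℂ) ^ 2) * φ ρ) := by
  change _ = (ρ : ℂ) ^ 2 * iteratedDeriv 2 (besselOp m φ) ρ - 3 * ρ * deriv (besselOp m φ) ρ
    + (4 - (m : ℂ) ^ 2) * besselOp m φ ρ
  rw [iteratedDeriv_two_besselOp _ hφ isOpen_Ioi hρ,
    deriv_besselOp _ (hφ.of_le (by norm_num)) isOpen_Ioi hρ, besselOp]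
  ring
end
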